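/- Let f : ℝⁿ → ℝ be convex and differentiable with L₁-Lipschitz gradient, with global minimum f* at x*. Let u be a standard Gaussian vector and μ > 0. Then ⟨∇f_μ(x), x − x*⟩ ≥ f(x) − f* − (μ²/2)L₁n, where f_μ is the Gaussian smoothing of f. -/

import Mathlib

/-!
The smoothing `f_μ y = 𝔼 f (y + μ u)` is convex, being an average of translates of `f`, so
`⟨∇f_μ x, x - x*⟩ ≥ f_μ x - f_μ x*`. Jensen's inequality with `𝔼 u = 0` gives `f x ≤ f_μ x`,
and averaging the descent lemma `f (x* + h) ≤ f x* + ⟨∇f x*, h⟩ + L₁/2 ‖h‖²` over `h = μ u`,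
with `𝔼 u = 0` and `𝔼 ‖u‖² = n`, gives `f_μ x* ≤ f x* + μ²/2 L₁ n`.
The first-order Taylor remainder of `f` lies in `[0, L₁/2 ‖h‖²]` by convexity and the descent
lemma; averaging it shows that `f_μ` is differentiable with derivative `𝔼 Df (x + μ u)`.
-/

open MeasureTheory ProbabilityTheory Set Filter Asymptotics

section FirstOrder

variable {E : Type*} [NormedAddCommGroup E] [NormedSpace ℝ E] {f : E → ℝ}

theorem ConvexOn.add_le_of_hasFDerivAt (hf : ConvexOn ℝ univ f) {f' : E →L[ℝ] ℝ} {a : E}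
    (hf' : HasFDerivAt f f' a) (b : E) : f a + f' (b - a) ≤ f b := by
  have hline : ConvexOn ℝ univ (f ∘ AffineMap.lineMap (k := ℝ) a b) := by
    simpa using hf.comp_affineMap (AffineMap.lineMap (k := ℝ) a b)
  have hderiv : HasDerivAt (f ∘ AffineMap.lineMap (k := ℝ) a b) (f' (b - a)) 0 := by
    refine hf'.comp_hasDerivAt_of_eq 0 ?_ (by simp)
    simpa using AffineMap.hasDerivAt_lineMap (a := a) (b := b) (x := 0)
  have hslope := hline.le_slope_of_hasDerivAt (mem_univ 0) (mem_univ 1) one_pos hderiv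
  simp only [slope_def_field, Function.comp_apply, AffineMap.lineMap_apply_zero,
    AffineMap.lineMap_apply_one, sub_zero, div_one] at hslope
  linarith

theorem le_add_fderiv_add_sq {L : ℝ} (hdiff : Differentiable ℝ f)
    (hlip : ∀ x y, ‖fderiv ℝ f x - fderiv ℝ f y‖ ≤ L * ‖x - y‖) (a h : E) :
    f (a + h) ≤ f a + fderiv ℝ f a h + L / 2 * ‖h‖ ^ 2 := by
  -- `ψ 1 ≤ ψ 0` is the claim; the Lipschitz bound makes `ψ` antitone on `t ≥ 0`.
  set ψ : ℝ → ℝ := fun t => f (a + t • h) - t * fderiv ℝ f a h - L / 2 * t ^ 2 * ‖h‖ ^ 2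
  set ψ' : ℝ → ℝ := fun t => (fderiv ℝ f (a + t • h) - fderiv ℝ f a) h - L * t * ‖h‖ ^ 2
  have hψ : ∀ t, HasDerivAt ψ (ψ' t) t := by
    intro t
    have hcurve : HasDerivAt (fun t : ℝ => a + t • h) h t := by
      simpa using ((hasDerivAt_id t).smul_const h).const_add a
    refine ((((hdiff _).hasFDerivAt.comp_hasDerivAt t hcurve).sub
      ((hasDerivAt_id t).mul_const (fderiv ℝ f a h))).sub
      (((hasDerivAt_pow 2 t).const_mul (L / 2)).mul_const (‖h‖ ^ 2))).congr_deriv ?_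
    simp only [ψ', sub_apply]
    ring
  have hψ'_nonpos : ∀ t ∈ interior (Ici (0 : ℝ)), ψ' t ≤ 0 := by
    intro t ht
    rw [interior_Ici] at ht
    have hlip_a := hlip (a + t • h) a
    rw [add_sub_cancel_left, norm_smul, Real.norm_of_nonneg ht.le] at hlip_a
    refine sub_nonpos.2 ?_
    calc (fderiv ℝ f (a + t • h) - fderiv ℝ f a) h
        ≤ ‖fderiv ℝ f (a + t • h) - fderiv ℝ f a‖ * ‖h‖ :=
          (Real.le_norm_self _).trans (ContinuousLinearMap.le_opNorm _ _)
      _ ≤ L * (t * ‖h‖) * ‖h‖ := by gcongr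
      _ = L * t * ‖h‖ ^ 2 := by ring
  have hψ_le := antitoneOn_of_hasDerivWithinAt_nonpos (convex_Ici 0)
    (fun t _ => (hψ t).continuousAt.continuousWithinAt) (fun t _ => (hψ t).hasDerivWithinAt)
    hψ'_nonpos (a := 0) (b := 1) self_mem_Ici (mem_Ici.2 zero_le_one) zero_le_one
  simp only [ψ, zero_smul, one_smul, add_zero, zero_mul, one_mul, one_pow, mul_one,
    sub_zero, ne_eq, OfNat.ofNat_ne_zero, not_false_eq_true, zero_pow, mul_zero] at hψ_le
  linarith

theorem ConvexOn.abs_sub_sub_fderiv_le {L : ℝ} (hf : ConvexOn ℝ univ f) (hdiff : Differentiable ℝ f)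
    (hlip : ∀ x y, ‖fderiv ℝ f x - fderiv ℝ f y‖ ≤ L * ‖x - y‖) (a h : E) :
    |f (a + h) - f a - fderiv ℝ f a h| ≤ L / 2 * ‖h‖ ^ 2 := by
  have hlower := hf.add_le_of_hasFDerivAt (hdiff a).hasFDerivAt (a + h)
  rw [add_sub_cancel_left] at hlower
  have hupper := le_add_fderiv_add_sq hdiff hlip a h
  exact abs_le.2 ⟨by linarith, by linarith⟩

theorem norm_gradient_sub_gradient {F : Type*} [NormedAddCommGroup F] [InnerProductSpace ℝ F]
    [CompleteSpace F] (f : F → ℝ) (x y : F) :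
    ‖gradient f x - gradient f y‖ = ‖fderiv ℝ f x - fderiv ℝ f y‖ := by
  rw [gradient, gradient, ← map_sub, LinearIsometryEquiv.norm_map]

end FirstOrder

section StandardGaussian

variable {Ω : Type*} [MeasurableSpace Ω] {P : Measure Ω}

theorem ProbabilityTheory.HasLaw.integral_eq_zero_of_gaussianReal {X : Ω → ℝ}
    (hX : HasLaw X (gaussianReal 0 1) P) : ∫ ω, X ω ∂P = 0 := by
  rw [hX.integral_eq, integral_id_gaussianReal]

theorem ProbabilityTheory.HasLaw.integral_sq_eq_one_of_gaussianReal {X : Ω → ℝ}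
    (hX : HasLaw X (gaussianReal 0 1) P) : ∫ ω, X ω ^ 2 ∂P = 1 := by
  rw [← variance_of_integral_eq_zero hX.aemeasurable hX.integral_eq_zero_of_gaussianReal,
    hX.variance_eq, variance_id_gaussianReal, NNReal.coe_one]

variable {ι : Type*} [Fintype ι] {u : Ω → EuclideanSpace ℝ ι}

theorem integrable_of_hasLaw_gaussianReal
    (hu : ∀ i, HasLaw (fun ω => u ω i) (gaussianReal 0 1) P) : Integrable u P :=
  Integrable.of_eval_piLp fun i => (hu i).hasGaussianLaw.integrable

theorem integral_eq_zero_of_hasLaw_gaussianReal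
    (hu : ∀ i, HasLaw (fun ω => u ω i) (gaussianReal 0 1) P) : ∫ ω, u ω ∂P = 0 := by
  ext i
  rw [eval_integral_piLp fun i => (hu i).hasGaussianLaw.integrable]
  exact (hu i).integral_eq_zero_of_gaussianReal

theorem integrable_norm_sq_of_hasLaw_gaussianReal
    (hu : ∀ i, HasLaw (fun ω => u ω i) (gaussianReal 0 1) P) :
    Integrable (fun ω => ‖u ω‖ ^ 2) P := by
  simp_rw [EuclideanSpace.norm_sq_eq, Real.norm_eq_abs, sq_abs]
  exact integrable_finsetSum _ fun i _ => (hu i).hasGaussianLaw.memLp_two.integrable_sq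

theorem integral_norm_sq_of_hasLaw_gaussianReal
    (hu : ∀ i, HasLaw (fun ω => u ω i) (gaussianReal 0 1) P) :
    ∫ ω, ‖u ω‖ ^ 2 ∂P = Fintype.card ι := by
  simp_rw [EuclideanSpace.norm_sq_eq, Real.norm_eq_abs, sq_abs]
  rw [integral_finsetSum _ fun i _ => (hu i).hasGaussianLaw.memLp_two.integrable_sq]
  simp [fun i => (hu i).integral_sq_eq_one_of_gaussianReal]

end StandardGaussian

theorem hasFDerivAt_integral_of_abs_remainder_le {E Ω : Type*} [NormedAddCommGroup E]
    [NormedSpace ℝ E] [MeasurableSpace Ω] {P : Measure Ω} [IsFiniteMeasure P]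
    {F : E → Ω → ℝ} {F' : Ω → E →L[ℝ] ℝ} {x : E} {C : ℝ}
    (hF : ∀ y, Integrable (F y) P) (hF' : Integrable F' P)
    (hrem : ∀ h ω, |F (x + h) ω - F x ω - F' ω h| ≤ C * ‖h‖ ^ 2) :
    HasFDerivAt (fun y => ∫ ω, F y ω ∂P) (∫ ω, F' ω ∂P) x := by
  rw [hasFDerivAt_iff_isLittleO_nhds_zero]
  refine IsBigO.trans_isLittleO ?_ (isLittleO_norm_pow_id one_lt_two)
  refine IsBigO.of_bound (C * P.real univ) (Eventually.of_forall fun h => ?_)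
  have hsub : ∫ ω, F (x + h) ω ∂P - ∫ ω, F x ω ∂P - (∫ ω, F' ω ∂P) h
      = ∫ ω, (F (x + h) ω - F x ω - F' ω h) ∂P := by
    rw [ContinuousLinearMap.integral_apply hF', ← integral_sub (hF _) (hF _)]
    exact (integral_sub ((hF _).sub (hF _)) (hF'.apply_continuousLinearMap h)).symm
  rw [hsub, norm_pow, norm_norm, mul_right_comm]
  exact norm_integral_le_of_norm_le_const (ae_of_all _ (hrem h))

section Smoothing

variable {E Ω : Type*} [NormedAddCommGroup E] [NormedSpace ℝ E] [MeasurableSpace Ω]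
  {P : Measure Ω} {u : Ω → E} {μ : ℝ} {f : E → ℝ}

noncomputable def smoothing (P : Measure Ω) (u : Ω → E) (μ : ℝ) (f : E → ℝ) (y : E) : ℝ :=
  ∫ ω, f (y + μ • u ω) ∂P

theorem convexOn_smoothing (hf : ConvexOn ℝ univ f)
    (hint : ∀ y, Integrable (fun ω => f (y + μ • u ω)) P) :
    ConvexOn ℝ univ (smoothing P u μ f) := by
  refine ⟨convex_univ, fun y _ z _ a b ha hb hab => ?_⟩
  have hpoint : ∀ ω, f (a • y + b • z + μ • u ω)
      ≤ a * f (y + μ • u ω) + b * f (z + μ • u ω) := fun ω => by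
    have hsplit : a • y + b • z + μ • u ω = a • (y + μ • u ω) + b • (z + μ • u ω) := by
      conv_lhs => rw [← one_smul ℝ (μ • u ω), ← hab]
      module
    rw [hsplit]
    exact hf.2 (mem_univ _) (mem_univ _) ha hb hab
  calc smoothing P u μ f (a • y + b • z)
      ≤ ∫ ω, (a * f (y + μ • u ω) + b * f (z + μ • u ω)) ∂P :=
        integral_mono (hint _) (((hint y).const_mul a).add ((hint z).const_mul b)) hpoint
    _ = a • smoothing P u μ f y + b • smoothing P u μ f z := by
        rw [integral_add ((hint y).const_mul a) ((hint z).const_mul b), integral_const_mul,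
          integral_const_mul]
        rfl

theorem hasFDerivAt_smoothing [IsFiniteMeasure P] {L : ℝ} (hf : ConvexOn ℝ univ f)
    (hdiff : Differentiable ℝ f)
    (hlip : ∀ x y, ‖fderiv ℝ f x - fderiv ℝ f y‖ ≤ L * ‖x - y‖) (hu : Integrable u P)
    (hint : ∀ y, Integrable (fun ω => f (y + μ • u ω)) P) (x : E) :
    HasFDerivAt (smoothing P u μ f) (∫ ω, fderiv ℝ f (x + μ • u ω) ∂P) x := by
  have hμu : Integrable (fun ω => μ • u ω) P := hu.smul μ
  have hcont : Continuous (fderiv ℝ f) := by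
    refine (LipschitzWith.of_dist_le_mul (K := L.toNNReal) fun a b => ?_).continuous
    rw [dist_eq_norm, dist_eq_norm]
    exact (hlip a b).trans (by gcongr; exact L.le_coe_toNNReal)
  have hmeas : AEStronglyMeasurable (fun ω => fderiv ℝ f (x + μ • u ω)) P :=
    hcont.comp_aestronglyMeasurable (aestronglyMeasurable_const.add hμu.aestronglyMeasurable)
  have hbound : ∀ ω, ‖fderiv ℝ f (x + μ • u ω)‖ ≤ ‖fderiv ℝ f x‖ + L * ‖μ • u ω‖ := fun ω => by
    have hlip_x := hlip (x + μ • u ω) x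
    rw [add_sub_cancel_left] at hlip_x
    linarith [norm_sub_norm_le (fderiv ℝ f (x + μ • u ω)) (fderiv ℝ f x)]
  have hF' : Integrable (fun ω => fderiv ℝ f (x + μ • u ω)) P :=
    ((integrable_const _).add (hμu.norm.const_mul L)).mono' hmeas (ae_of_all _ hbound)
  refine hasFDerivAt_integral_of_abs_remainder_le (C := L / 2) hint hF' fun h ω => ?_
  show |f (x + h + μ • u ω) - f (x + μ • u ω) - fderiv ℝ f (x + μ • u ω) h| ≤ L / 2 * ‖h‖ ^ 2
  rw [add_right_comm]
  exact hf.abs_sub_sub_fderiv_le hdiff hlip _ h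

variable [CompleteSpace E] [IsProbabilityMeasure P]

theorem le_smoothing (hf : ConvexOn ℝ univ f) (hcont : Continuous f) (hu : Integrable u P)
    (hu0 : ∫ ω, u ω ∂P = 0) {y : E} (hint : Integrable (fun ω => f (y + μ • u ω)) P) :
    f y ≤ smoothing P u μ f y := by
  have hμu : Integrable (fun ω => μ • u ω) P := hu.smul μ
  have hmean : ∫ ω, (y + μ • u ω) ∂P = y := by
    rw [integral_add (integrable_const y) hμu, integral_smul, hu0, smul_zero, add_zero,
      integral_const, probReal_univ, one_smul]
  have hjensen : f (∫ ω, (y + μ • u ω) ∂P) ≤ ∫ ω, f (y + μ • u ω) ∂P :=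
    hf.map_integral_le hcont.continuousOn isClosed_univ (ae_of_all _ fun _ => mem_univ _)
      ((integrable_const y).add hμu) hint
  rwa [hmean] at hjensen

theorem smoothing_le {L : ℝ} (hdiff : Differentiable ℝ f)
    (hlip : ∀ x y, ‖fderiv ℝ f x - fderiv ℝ f y‖ ≤ L * ‖x - y‖) (hu : Integrable u P)
    (hu0 : ∫ ω, u ω ∂P = 0) (hu2 : Integrable (fun ω => ‖u ω‖ ^ 2) P) {y : E}
    (hint : Integrable (fun ω => f (y + μ • u ω)) P) :
    smoothing P u μ f y ≤ f y + L / 2 * μ ^ 2 * ∫ ω, ‖u ω‖ ^ 2 ∂P := by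
  have hμu : Integrable (fun ω => μ • u ω) P := hu.smul μ
  have hlin : Integrable (fun ω => fderiv ℝ f y (μ • u ω)) P :=
    (fderiv ℝ f y).integrable_comp hμu
  have hlin0 : ∫ ω, fderiv ℝ f y (μ • u ω) ∂P = 0 := by
    rw [(fderiv ℝ f y).integral_comp_comm hμu, integral_smul, hu0, smul_zero, map_zero]
  have hconst_lin : Integrable (fun ω => f y + fderiv ℝ f y (μ • u ω)) P :=
    (integrable_const _).add hlin
  have hquad : Integrable (fun ω => L / 2 * μ ^ 2 * ‖u ω‖ ^ 2) P := hu2.const_mul _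
  calc smoothing P u μ f y
      ≤ ∫ ω, (f y + fderiv ℝ f y (μ • u ω) + L / 2 * μ ^ 2 * ‖u ω‖ ^ 2) ∂P := by
        refine integral_mono hint (hconst_lin.add hquad) fun ω => ?_
        have hdescent := le_add_fderiv_add_sq hdiff hlip y (μ • u ω)
        rwa [norm_smul, mul_pow, Real.norm_eq_abs, sq_abs, ← mul_assoc] at hdescent
    _ = f y + L / 2 * μ ^ 2 * ∫ ω, ‖u ω‖ ^ 2 ∂P := by
        rw [integral_add hconst_lin hquad,
          integral_add (integrable_const _) hlin, hlin0, integral_const, integral_const_mul,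
          probReal_univ, one_smul, add_zero]

end Smoothing

theorem smoothed_gradient_inner_bound_general {n : ℕ} {Ω : Type*} [MeasurableSpace Ω]
    (P : Measure Ω) [IsProbabilityMeasure P]
    (u : Ω → EuclideanSpace ℝ (Fin n))
    (hmeas : ∀ i, Measurable fun ω => u ω i)
    (hlaw : ∀ i, Measure.map (fun ω => u ω i) P = gaussianReal 0 1)
    (f : EuclideanSpace ℝ (Fin n) → ℝ) (L₁ : ℝ)
    (hf : ConvexOn ℝ Set.univ f) (hdiff : Differentiable ℝ f)
    (hlip : ∀ x y, ‖gradient f x - gradient f y‖ ≤ L₁ * ‖x - y‖)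
    (xstar : EuclideanSpace ℝ (Fin n))
    (μ : ℝ) (x : EuclideanSpace ℝ (Fin n))
    (hint : ∀ y, Integrable (fun ω => f (y + μ • u ω)) P) :
    f x - f xstar - μ ^ 2 / 2 * L₁ * n
      ≤ (inner ℝ (gradient (fun y => ∫ ω, f (y + μ • u ω) ∂P) x) (x - xstar) : ℝ) := by
  have hcoord : ∀ i, HasLaw (fun ω => u ω i) (gaussianReal 0 1) P :=
    fun i => ⟨(hmeas i).aemeasurable, hlaw i⟩
  have hu := integrable_of_hasLaw_gaussianReal hcoord
  have hu0 := integral_eq_zero_of_hasLaw_gaussianReal hcoord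
  have hlip' : ∀ x y, ‖fderiv ℝ f x - fderiv ℝ f y‖ ≤ L₁ * ‖x - y‖ :=
    fun x y => norm_gradient_sub_gradient f x y ▸ hlip x y
  have hderiv := hasFDerivAt_smoothing hf hdiff hlip' hu hint x
  have hconvex := (convexOn_smoothing hf hint).add_le_of_hasFDerivAt hderiv xstar
  have hlower := le_smoothing hf hdiff.continuous hu hu0 (hint x)
  have hupper := smoothing_le hdiff hlip' hu hu0
    (integrable_norm_sq_of_hasLaw_gaussianReal hcoord) (hint xstar)
  rw [integral_norm_sq_of_hasLaw_gaussianReal hcoord, Fintype.card_fin] at hupper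
  change _ ≤ inner ℝ (gradient (smoothing P u μ f) x) (x - xstar)
  rw [hderiv.hasGradientAt.gradient, InnerProductSpace.toDual_symm_apply, ← neg_sub xstar x,
    map_neg]
  linarith

theorem smoothed_gradient_inner_bound {n : ℕ} {Ω : Type*} [MeasurableSpace Ω]
    (P : Measure Ω) [IsProbabilityMeasure P]
    (u : Ω → EuclideanSpace ℝ (Fin n))
    (hmeas : ∀ i, Measurable fun ω => u ω i)
    (hlaw : ∀ i, Measure.map (fun ω => u ω i) P = gaussianReal 0 1)
    (hindep : iIndepFun (fun i ω => u ω i) P)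
    (f : EuclideanSpace ℝ (Fin n) → ℝ) (L₁ : ℝ)
    (hf : ConvexOn ℝ Set.univ f) (hdiff : Differentiable ℝ f)
    (hlip : ∀ x y, ‖gradient f x - gradient f y‖ ≤ L₁ * ‖x - y‖)
    (xstar : EuclideanSpace ℝ (Fin n)) (hmin : ∀ y, f xstar ≤ f y)
    (μ : ℝ) (hμ : 0 < μ) (x : EuclideanSpace ℝ (Fin n))
    (hint : ∀ y, Integrable (fun ω => f (y + μ • u ω)) P) :
    f x - f xstar - μ ^ 2 / 2 * L₁ * n
      ≤ (inner ℝ (gradient (fun y => ∫ ω, f (y + μ • u ω) ∂P) x) (x - xstar) : ℝ) :=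
  smoothed_gradient_inner_bound_general P u hmeas hlaw f L₁ hf hdiff hlip xstar μ x hint
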